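/- arXiv:1703.03723 — 2 statements merged into one kernel-verified Lean document; each statement's English description precedes it below -/
import Mathlib

section
/- Let s ∈ (0,1) and let u ∈ H^s(ℝ³) with u⁺ ≠ 0 and u⁻ ≠ 0. Then the Gagliardo cross term is strictly positive: ∬_{ℝ³×ℝ³} (u⁺(x)−u⁺(y))(u⁻(x)−u⁻(y)) / |x−y|^{3+2s} dx dy > 0. -/
open MeasureTheory Filter Metric Set

noncomputable section

namespace FSP

/-- Euclidean three-space. -/
abbrev E3 := EuclideanSpace ℝ (Fin 3)

/-- The Gagliardo bilinear form `∬ (u(x)-u(y))(v(x)-v(y))/|x-y|^{3+2s} dx dy`. -/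
def gagli (s : ℝ) (u v : E3 → ℝ) : ℝ :=
  ∫ p : E3 × E3, (u p.1 - u p.2) * (v p.1 - v p.2) / ‖p.1 - p.2‖ ^ (3 + 2*s)

/-- The squared Gagliardo seminorm `[u]_s²`. -/
def gagliSq (s : ℝ) (u : E3 → ℝ) : ℝ :=
  ∫ p : E3 × E3, (u p.1 - u p.2)^2 / ‖p.1 - p.2‖ ^ (3 + 2*s)

/-- Finiteness of the Gagliardo seminorm. -/
def HasFinGagliardo (s : ℝ) (u : E3 → ℝ) : Prop :=
  Integrable (fun p : E3 × E3 => (u p.1 - u p.2)^2 / ‖p.1 - p.2‖ ^ (3 + 2*s))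

/-- Membership in the fractional Sobolev space `H^s(ℝ³)`. -/
def InHs (s : ℝ) (u : E3 → ℝ) : Prop :=
  MemLp u 2 volume ∧ HasFinGagliardo s u

/-- Membership in the homogeneous space `D^{α,2}(ℝ³)`. -/
def InD (α : ℝ) (v : E3 → ℝ) : Prop :=
  MemLp v (ENNReal.ofReal (6 / (3 - 2*α))) volume ∧ HasFinGagliardo α v

/-- Membership in the working space `H = {u ∈ H^s : ∫ V u² < ∞}`. -/
def InH (s : ℝ) (V : E3 → ℝ) (u : E3 → ℝ) : Prop :=
  InHs s u ∧ Integrable (fun x => V x * (u x)^2)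

/-- Squared norm on `H`: `‖u‖² = [u]_s² + ∫ V u²`. -/
def normSq (s : ℝ) (V : E3 → ℝ) (u : E3 → ℝ) : ℝ :=
  gagliSq s u + ∫ x, V x * (u x)^2

/-- Norm on `H`. -/
def normH (s : ℝ) (V : E3 → ℝ) (u : E3 → ℝ) : ℝ :=
  Real.sqrt (normSq s V u)

/-- The `t`-Riesz potential of `u²` (normalizing constant omitted). -/
def phiRiesz (t : ℝ) (u : E3 → ℝ) (x : E3) : ℝ :=
  ∫ y, (u y)^2 / ‖x - y‖ ^ (3 - 2*t)

/-- The Coulomb-type double integral `∬ u(x)² u(y)² / |x-y|^{3-2t} dx dy`. -/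
def coulomb (t : ℝ) (u : E3 → ℝ) : ℝ :=
  ∫ p : E3 × E3, (u p.1)^2 * (u p.2)^2 / ‖p.1 - p.2‖ ^ (3 - 2*t)

/-- The primitive `F(x,τ) = ∫₀^τ f(x,r) dr`. -/
def Fprim (f : E3 → ℝ → ℝ) (x : E3) (τ : ℝ) : ℝ :=
  ∫ r in (0:ℝ)..τ, f x r

/-- The energy functional `I_λ`. -/
def energy (s t lam : ℝ) (V : E3 → ℝ) (f : E3 → ℝ → ℝ) (u : E3 → ℝ) : ℝ :=
  (1/2) * normSq s V u + (lam/4) * (∫ x, phiRiesz t u x * (u x)^2)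
    - ∫ x, Fprim f x (u x)

/-- The derivative pairing `⟨I_λ'(u), v⟩`. -/
def pairing (s t lam : ℝ) (V : E3 → ℝ) (f : E3 → ℝ → ℝ) (u v : E3 → ℝ) : ℝ :=
  gagli s u v + (∫ x, V x * u x * v x)
    + lam * (∫ x, phiRiesz t u x * u x * v x)
    - ∫ x, f x (u x) * v x

/-- Condition (V1). -/
def CondV1 (V : E3 → ℝ) (V₀ : ℝ) : Prop :=
  0 < V₀ ∧ Continuous V ∧ ∀ x, V₀ ≤ V x

/-- Condition (V2). -/
def CondV2 (V : E3 → ℝ) : Prop :=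
  ∃ h > (0:ℝ), ∀ c > (0:ℝ),
    Tendsto (fun y : E3 => (volume {x : E3 | x ∈ ball y h ∧ V x ≤ c}).toReal)
      (comap (fun y : E3 => ‖y‖) atTop) (nhds 0)

/-- `f` is a Carathéodory function. -/
def Caratheodory (f : E3 → ℝ → ℝ) : Prop :=
  (∀ τ : ℝ, Measurable fun x => f x τ) ∧ ∀ᵐ x : E3, Continuous fun τ => f x τ

/-- Condition (f1): `f(x,τ) = o(|τ|)` as `τ → 0`, uniformly in `x`. -/
def Condf1 (f : E3 → ℝ → ℝ) : Prop :=
  ∀ ε > (0:ℝ), ∃ δ > (0:ℝ), ∀ (x : E3) (τ : ℝ), |τ| ≤ δ → |f x τ| ≤ ε * |τ|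

/-- Condition (f2): subcritical growth. -/
def Condf2 (s : ℝ) (f : E3 → ℝ → ℝ) : Prop :=
  ∃ C > (0:ℝ), ∃ p : ℝ, 1 < p ∧ p < 6/(3 - 2*s) - 1 ∧
    ∀ (x : E3) (τ : ℝ), |f x τ| ≤ C * (1 + |τ| ^ p)

/-- Condition (f3): `F(x,τ)/τ⁴ → +∞` as `|τ| → ∞`. -/
def Condf3 (f : E3 → ℝ → ℝ) : Prop :=
  ∀ x : E3, Tendsto (fun τ : ℝ => Fprim f x τ / τ^4)
    (comap (fun τ : ℝ => |τ|) atTop) atTop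

/-- Condition (f4): `τ ↦ f(x,τ)/|τ|³` is increasing on `ℝ∖{0}` for a.e. `x`. -/
def Condf4 (f : E3 → ℝ → ℝ) : Prop :=
  ∀ᵐ x : E3, ∀ τ₁ τ₂ : ℝ, τ₁ ≠ 0 → τ₂ ≠ 0 → τ₁ < τ₂ →
    f x τ₁ / |τ₁|^3 < f x τ₂ / |τ₂|^3

/-- Positive part `u⁺ = max(u,0)`. -/
def posPart (u : E3 → ℝ) : E3 → ℝ := fun x => max (u x) 0

/-- Negative part `u⁻ = min(u,0)`. -/
def negPart (u : E3 → ℝ) : E3 → ℝ := fun x => min (u x) 0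

/-- `u` is nonzero on a set of positive measure. -/
def AENonzero (u : E3 → ℝ) : Prop := ¬ (u =ᵐ[volume] (0 : E3 → ℝ))

/-- `u` changes sign: `u⁺ ≠ 0` and `u⁻ ≠ 0`. -/
def SignChanging (u : E3 → ℝ) : Prop := AENonzero (posPart u) ∧ AENonzero (negPart u)

/-- `u` is a weak solution of `(−Δ)ˢu + Vu + λφ_u u = f(x,u)`. -/
def IsWeakSol (s t lam : ℝ) (V : E3 → ℝ) (f : E3 → ℝ → ℝ) (u : E3 → ℝ) : Prop :=
  InH s V u ∧ ∀ v, InH s V v → pairing s t lam V f u v = 0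

/-- `u` is a least energy sign-changing solution. -/
def IsLESCS (s t lam : ℝ) (V : E3 → ℝ) (f : E3 → ℝ → ℝ) (u : E3 → ℝ) : Prop :=
  IsWeakSol s t lam V f u ∧ SignChanging u ∧
    ∀ v, IsWeakSol s t lam V f v → SignChanging v →
      energy s t lam V f u ≤ energy s t lam V f v

/-- Membership in the sign-changing Nehari-type set `M_λ`. -/
def InM (s t lam : ℝ) (V : E3 → ℝ) (f : E3 → ℝ → ℝ) (u : E3 → ℝ) : Prop :=
  InH s V u ∧ SignChanging u ∧
    pairing s t lam V f u (posPart u) = 0 ∧ pairing s t lam V f u (negPart u) = 0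

/-- Membership in the Nehari manifold `N_λ`. -/
def InN (s t lam : ℝ) (V : E3 → ℝ) (f : E3 → ℝ → ℝ) (u : E3 → ℝ) : Prop :=
  InH s V u ∧ AENonzero u ∧ pairing s t lam V f u u = 0

/-- `m_λ = inf_{M_λ} I_λ`. -/
def mlevel (s t lam : ℝ) (V : E3 → ℝ) (f : E3 → ℝ → ℝ) : ℝ :=
  sInf (energy s t lam V f '' {u | InM s t lam V f u})

/-- `c_λ = inf_{N_λ} I_λ`. -/
def clevel (s t lam : ℝ) (V : E3 → ℝ) (f : E3 → ℝ → ℝ) : ℝ :=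
  sInf (energy s t lam V f '' {u | InN s t lam V f u})

/-- `u` admits a decomposition into three nontrivial pieces with pairwise disjoint
supports, the first nonnegative a.e. and the second nonpositive a.e. (i.e. `u` has at
least three nodal domains). -/
def HasThreeNodal (s : ℝ) (V : E3 → ℝ) (u : E3 → ℝ) : Prop :=
  ∃ u₁ u₂ u₃ : E3 → ℝ,
    InH s V u₁ ∧ InH s V u₂ ∧ InH s V u₃ ∧
    AENonzero u₁ ∧ AENonzero u₂ ∧ AENonzero u₃ ∧
    Disjoint (Function.support u₁) (Function.support u₂) ∧
    Disjoint (Function.support u₁) (Function.support u₃) ∧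
    Disjoint (Function.support u₂) (Function.support u₃) ∧
    (∀ᵐ x : E3, 0 ≤ u₁ x) ∧ (∀ᵐ x : E3, u₂ x ≤ 0) ∧
    (∀ x, u x = u₁ x + u₂ x + u₃ x)

end FSP

/-- Strict positivity of the Gagliardo cross term of `u⁺` and `u⁻` for sign-changing
`u ∈ H^s(ℝ³)`. -/
theorem fsp_gagliardo_cross_term_positive
    (s : ℝ) (hs : 0 < s ∧ s < 1)
    (u : FSP.E3 → ℝ) (hu : FSP.InHs s u)
    (hpos : FSP.AENonzero (FSP.posPart u)) (hneg : FSP.AENonzero (FSP.negPart u)) :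
    0 < FSP.gagli s (FSP.posPart u) (FSP.negPart u) := by
  obtain ⟨hmem, hfin⟩ := hu
  have hκpos : (0:ℝ) < 3 + 2*s := by linarith [hs.1]
  set f : FSP.E3 × FSP.E3 → ℝ := fun p =>
    (FSP.posPart u p.1 - FSP.posPart u p.2) * (FSP.negPart u p.1 - FSP.negPart u p.2)
      / ‖p.1 - p.2‖ ^ (3 + 2*s) with hf
  -- numerator nonneg
  have hnum : ∀ a b : ℝ, 0 ≤ (max a 0 - max b 0) * (min a 0 - min b 0) := by
    intro a b
    rcases le_total a 0 with ha | ha <;> rcases le_total b 0 with hb | hb <;>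
      simp [max_eq_right, max_eq_left, min_eq_left, min_eq_right, ha, hb] <;> nlinarith
  have hbound : ∀ a b : ℝ, (max a 0 - max b 0) * (min a 0 - min b 0) ≤ (1/2) * (a-b)^2 := by
    intro a b
    have h1 : max a 0 + min a 0 = a := by rw [max_add_min]; ring
    have h2 : max b 0 + min b 0 = b := by rw [max_add_min]; ring
    have hpq : (max a 0 - max b 0) + (min a 0 - min b 0) = a - b := by linarith
    have h3 : (a-b)^2 = ((max a 0 - max b 0) + (min a 0 - min b 0))^2 := by rw [hpq]
    nlinarith [sq_nonneg (max a 0 - max b 0), sq_nonneg (min a 0 - min b 0), h3]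
  have hf_nonneg : ∀ p, 0 ≤ f p := fun p =>
    div_nonneg (hnum _ _) (Real.rpow_nonneg (norm_nonneg _) _)
  -- measurability
  have hum : AEStronglyMeasurable u (volume : Measure FSP.E3) := hmem.aestronglyMeasurable
  have h1 : AEStronglyMeasurable (fun p : FSP.E3 × FSP.E3 => u p.1) volume := by
    rw [MeasureTheory.Measure.volume_eq_prod]; exact hum.comp_fst
  have h2 : AEStronglyMeasurable (fun p : FSP.E3 × FSP.E3 => u p.2) volume := by
    rw [MeasureTheory.Measure.volume_eq_prod]; exact hum.comp_snd
  have hden : Continuous (fun p : FSP.E3 × FSP.E3 => ‖p.1 - p.2‖ ^ (3 + 2*s)) := by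
    apply Continuous.rpow_const ((continuous_fst.sub continuous_snd).norm)
    intro p; right; linarith
  have hfm : AEStronglyMeasurable f volume := by
    have cmax : Continuous (fun t : ℝ => max t 0) := continuous_id.max continuous_const
    have cmin : Continuous (fun t : ℝ => min t 0) := continuous_id.min continuous_const
    have hN : AEStronglyMeasurable (fun p : FSP.E3 × FSP.E3 =>
        (FSP.posPart u p.1 - FSP.posPart u p.2) * (FSP.negPart u p.1 - FSP.negPart u p.2))
        volume :=
      (((cmax.comp_aestronglyMeasurable h1).sub
        (cmax.comp_aestronglyMeasurable h2)).mul
      ((cmin.comp_aestronglyMeasurable h1).sub (cmin.comp_aestronglyMeasurable h2)))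
    exact (hN.aemeasurable.div hden.aestronglyMeasurable.aemeasurable).aestronglyMeasurable
  -- integrability
  have hfint : Integrable f volume := by
    refine Integrable.mono' (hfin.const_mul (1/2)) hfm (ae_of_all _ fun p => ?_)
    rw [Real.norm_eq_abs, abs_of_nonneg (hf_nonneg p)]
    have hd : (0:ℝ) ≤ ‖p.1 - p.2‖ ^ (3 + 2*s) := Real.rpow_nonneg (norm_nonneg _) _
    rcases hd.eq_or_lt with h0 | h0
    · simp [hf, ← h0]
    · rw [mul_div_assoc']
      exact (div_le_div_iff_of_pos_right h0).mpr (hbound _ _)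
  -- positivity of support measure
  set A : Set FSP.E3 := {x | 0 < u x} with hA
  set B : Set FSP.E3 := {x | u x < 0} with hB
  have hAB : A ×ˢ B ⊆ Function.support f := by
    rintro ⟨x, y⟩ ⟨hx, hy⟩
    have hx : 0 < u x := hx
    have hy : u y < 0 := hy
    have hxy : x ≠ y := by intro h; rw [h] at hx; linarith
    have hnorm : 0 < ‖x - y‖ := by
      simpa [sub_eq_zero] using norm_pos_iff.2 (sub_ne_zero.2 hxy)
    have hdpos : 0 < ‖x - y‖ ^ (3 + 2*s) := Real.rpow_pos_of_pos hnorm _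
    have : 0 < f (x, y) := by
      have : FSP.posPart u x = u x := max_eq_left hx.le
      have h2' : FSP.posPart u y = 0 := max_eq_right hy.le
      have h3' : FSP.negPart u x = 0 := min_eq_right hx.le
      have h4' : FSP.negPart u y = u y := min_eq_left hy.le
      simp only [hf, this, h2', h3', h4']
      apply div_pos _ hdpos
      nlinarith
    exact ne_of_gt this
  have hAμ : (volume : Measure FSP.E3) A ≠ 0 := by
    intro h
    apply hpos
    have : ∀ᵐ x : FSP.E3, ¬ (0 < u x) := by
      rw [ae_iff]; simpa using h
    filter_upwards [this] with x hx
    simp only [FSP.posPart, Pi.zero_apply]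
    exact max_eq_right (not_lt.mp hx)
  have hBμ : (volume : Measure FSP.E3) B ≠ 0 := by
    intro h
    apply hneg
    have : ∀ᵐ x : FSP.E3, ¬ (u x < 0) := by
      rw [ae_iff]; simpa using h
    filter_upwards [this] with x hx
    simp only [FSP.negPart, Pi.zero_apply]
    exact min_eq_right (not_lt.mp hx)
  have hsupp : 0 < (volume : Measure (FSP.E3 × FSP.E3)) (Function.support f) := by
    have hprod : (volume : Measure (FSP.E3 × FSP.E3)) (A ×ˢ B) = volume A * volume B := by
      rw [MeasureTheory.Measure.volume_eq_prod]; exact Measure.prod_prod A B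
    calc (0:ENNReal) < volume A * volume B := ENNReal.mul_pos hAμ hBμ
      _ = volume (A ×ˢ B) := hprod.symm
      _ ≤ volume (Function.support f) := measure_mono hAB
  have := (integral_pos_iff_support_of_nonneg_ae (ae_of_all _ hf_nonneg) hfint).mpr hsupp
  simpa [FSP.gagli, hf] using this
end
end

section
/- Let f : ℝ³ × ℝ → ℝ be a Carathéodory function such that, for a.e. x ∈ ℝ³, τ ↦ f(x,τ)/|τ|³ is increasing on ℝ∖{0} (condition (f4)), and set F(x,τ) = ∫₀^τ f(x,r) dr and H(x,τ) = f(x,τ)τ − 4F(x,τ). Then for a.e. x ∈ ℝ³: H(x,τ) ≥ 0 for all τ ∈ ℝ, and H(x,·) is nondecreasing in |τ|, i.e., nondecreasing on [0,∞) and nonincreasing on (−∞,0]. -/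
open MeasureTheory Filter Metric Set

noncomputable section

/-- Under (f4), `H(x,τ) = f(x,τ)τ − 4F(x,τ)` is nonnegative and nondecreasing in `|τ|`
for a.e. `x`. -/
theorem fsp_H_nonneg_monotone
    (f : FSP.E3 → ℝ → ℝ) (hf : FSP.Caratheodory f) (hf4 : FSP.Condf4 f) :
    ∀ᵐ x : FSP.E3,
      (∀ τ : ℝ, 0 ≤ f x τ * τ - 4 * FSP.Fprim f x τ) ∧
      MonotoneOn (fun τ => f x τ * τ - 4 * FSP.Fprim f x τ) (Set.Ici (0:ℝ)) ∧
      AntitoneOn (fun τ => f x τ * τ - 4 * FSP.Fprim f x τ) (Set.Iic (0:ℝ)) := by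
  filter_upwards [hf.2, hf4] with x hc h4
  -- basic facts
  have hint : ∀ a b : ℝ, IntervalIntegrable (f x) volume a b :=
    fun a b => hc.intervalIntegrable a b
  -- f x 0 = 0
  have hf0 : f x 0 = 0 := by
    have htf : Tendsto (f x) (nhdsWithin 0 (Set.Ioi 0)) (nhds (f x 0)) :=
      (hc.tendsto 0).mono_left nhdsWithin_le_nhds
    have htf' : Tendsto (f x) (nhdsWithin 0 (Set.Iio 0)) (nhds (f x 0)) :=
      (hc.tendsto 0).mono_left nhdsWithin_le_nhds
    have hub : f x 0 ≤ 0 := by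
      have ht2 : Tendsto (fun r : ℝ => f x 1 * r ^ 3) (nhdsWithin 0 (Set.Ioi 0)) (nhds 0) := by
        have h0 : Tendsto (fun r : ℝ => f x 1 * r ^ 3) (nhds 0) (nhds (f x 1 * 0 ^ 3)) :=
          ((continuous_const.mul (continuous_pow 3)).tendsto 0)
        simpa using h0.mono_left nhdsWithin_le_nhds
      refine le_of_tendsto_of_tendsto htf ht2 ?_
      filter_upwards [Ioo_mem_nhdsGT_of_mem (by norm_num : (0:ℝ) ∈ Set.Ico 0 1)] with r hr
      have h := h4 r 1 (ne_of_gt hr.1) one_ne_zero hr.2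
      rw [abs_of_pos hr.1] at h
      simp only [abs_one, one_pow, div_one] at h
      have := (div_lt_iff₀ (pow_pos hr.1 3)).1 h
      linarith
    have hlb : 0 ≤ f x 0 := by
      have ht2 : Tendsto (fun r : ℝ => f x (-1) * (-r) ^ 3) (nhdsWithin 0 (Set.Iio 0)) (nhds 0) := by
        have h0 : Tendsto (fun r : ℝ => f x (-1) * (-r) ^ 3) (nhds 0) (nhds (f x (-1) * (-(0:ℝ)) ^ 3)) :=
          (continuous_const.mul ((continuous_neg).pow 3)).tendsto 0
        simpa using h0.mono_left nhdsWithin_le_nhds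
      refine le_of_tendsto_of_tendsto ht2 htf' ?_
      filter_upwards [Ioo_mem_nhdsLT_of_mem (by norm_num : (0:ℝ) ∈ Set.Ioc (-1) 0)] with r hr
      have h := h4 (-1) r (by norm_num) (ne_of_lt hr.2) hr.1
      rw [abs_of_neg hr.2] at h
      simp only [abs_neg, abs_one, one_pow, div_one] at h
      have hrp : (0:ℝ) < (-r) ^ 3 := pow_pos (by linarith [hr.2]) 3
      have := (lt_div_iff₀ hrp).1 h
      linarith
    linarith
  -- monotone comparison on the positive side
  have hmono_le : ∀ r b : ℝ, 0 < b → 0 ≤ r → r ≤ b → f x r * b ^ 3 ≤ f x b * r ^ 3 := by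
    intro r b hb hr hrb
    rcases eq_or_lt_of_le hr with h0 | h0
    · rw [← h0, hf0]; simp
    rcases eq_or_lt_of_le hrb with he | he
    · rw [he]
    have h := h4 r b (ne_of_gt h0) (ne_of_gt hb) he
    rw [abs_of_pos h0, abs_of_pos hb] at h
    have := (div_lt_div_iff₀ (pow_pos h0 3) (pow_pos hb 3)).1 h
    linarith
  -- monotone comparison on the negative side
  have hneg_le : ∀ a r : ℝ, a < 0 → a ≤ r → r ≤ 0 → f x a * (-r) ^ 3 ≤ f x r * (-a) ^ 3 := by
    intro a r ha har hr
    rcases eq_or_lt_of_le hr with h0 | h0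
    · rw [h0, hf0]; simp
    rcases eq_or_lt_of_le har with he | he
    · rw [he]
    have h := h4 a r (ne_of_lt ha) (ne_of_lt h0) he
    rw [abs_of_neg ha, abs_of_neg h0] at h
    have := (div_lt_div_iff₀ (pow_pos (by linarith : (0:ℝ) < -a) 3) (pow_pos (by linarith : (0:ℝ) < -r) 3)).1 h
    linarith
  -- key integral bound, positive side
  have key_pos : ∀ a b : ℝ, 0 ≤ a → a ≤ b → 0 < b →
      (∫ r in a..b, f x r) * b ^ 3 ≤ f x b * ((b ^ 4 - a ^ 4) / 4) := by
    intro a b ha hab hb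
    have hb3 : (b:ℝ) ^ 3 ≠ 0 := ne_of_gt (pow_pos hb 3)
    have hcomp : ∫ r in a..b, f x r ≤ ∫ r in a..b, f x b / b ^ 3 * r ^ 3 := by
      refine intervalIntegral.integral_mono_on hab (hint a b)
        ((continuous_const.mul (continuous_pow 3)).intervalIntegrable a b) ?_
      intro r hr
      rw [div_mul_eq_mul_div, le_div_iff₀ (pow_pos hb 3)]
      exact hmono_le r b hb (le_trans ha hr.1) hr.2
    have hval : ∫ r in a..b, f x b / b ^ 3 * r ^ 3
        = f x b / b ^ 3 * ((b ^ 4 - a ^ 4) / 4) := by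
      rw [intervalIntegral.integral_const_mul, integral_pow]
      norm_num
    have h1 : (∫ r in a..b, f x r) ≤ f x b / b ^ 3 * ((b ^ 4 - a ^ 4) / 4) :=
      hval ▸ hcomp
    have h2 := mul_le_mul_of_nonneg_right h1 (pow_pos hb 3).le
    have heq : f x b / b ^ 3 * ((b ^ 4 - a ^ 4) / 4) * b ^ 3
        = f x b * ((b ^ 4 - a ^ 4) / 4) := by
      field_simp
    linarith [h2, heq.le, heq.ge]
  -- key integral bound, negative side
  have key_neg : ∀ a b : ℝ, a < 0 → a ≤ b → b ≤ 0 →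
      f x a * ((a ^ 4 - b ^ 4) / 4) ≤ (∫ r in a..b, f x r) * (-a) ^ 3 := by
    intro a b ha hab hb
    have hna : (0:ℝ) < (-a) ^ 3 := pow_pos (by linarith) 3
    have hna' : ((-a):ℝ) ^ 3 ≠ 0 := ne_of_gt hna
    have hcomp : ∫ r in a..b, -(f x a / (-a) ^ 3) * r ^ 3 ≤ ∫ r in a..b, f x r := by
      refine intervalIntegral.integral_mono_on hab
        ((continuous_const.mul (continuous_pow 3)).intervalIntegrable a b) (hint a b) ?_
      intro r hr
      have h := hneg_le a r ha hr.1 (le_trans hr.2 hb)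
      have heq : -(f x a / (-a) ^ 3) * r ^ 3 = f x a * (-r) ^ 3 / (-a) ^ 3 := by
        ring
      rw [heq, div_le_iff₀ hna]
      exact h
    have hval : ∫ r in a..b, -(f x a / (-a) ^ 3) * r ^ 3
        = -(f x a / (-a) ^ 3) * ((b ^ 4 - a ^ 4) / 4) := by
      rw [intervalIntegral.integral_const_mul, integral_pow]
      norm_num
    have h1 : -(f x a / (-a) ^ 3) * ((b ^ 4 - a ^ 4) / 4) ≤ ∫ r in a..b, f x r :=
      hval ▸ hcomp
    have h2 := mul_le_mul_of_nonneg_right h1 hna.le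
    have heq : -(f x a / (-a) ^ 3) * ((b ^ 4 - a ^ 4) / 4) * (-a) ^ 3
        = f x a * ((a ^ 4 - b ^ 4) / 4) := by
      rw [show -(f x a / (-a) ^ 3) * ((b ^ 4 - a ^ 4) / 4) * (-a) ^ 3 = f x a * ((a ^ 4 - b ^ 4) / 4) * ((-a) ^ 3 / (-a) ^ 3) by ring, div_self hna', mul_one]
    linarith [h2, heq.le, heq.ge]
  -- H(0) = 0 and Fprim identities
  have hF : ∀ τ : ℝ, FSP.Fprim f x τ = ∫ r in (0:ℝ)..τ, f x r := fun τ => rfl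
  have hF0 : FSP.Fprim f x 0 = 0 := by rw [hF]; exact intervalIntegral.integral_same
  -- nonnegativity
  have hnonneg : ∀ τ : ℝ, 0 ≤ f x τ * τ - 4 * FSP.Fprim f x τ := by
    intro τ
    rcases lt_trichotomy τ 0 with ht | ht | ht
    · have h := key_neg τ 0 ht ht.le le_rfl
      have hFτ : FSP.Fprim f x τ = -∫ r in τ..(0:ℝ), f x r := by
        rw [hF, intervalIntegral.integral_symm]
      have hna : (0:ℝ) < (-τ) ^ 3 := pow_pos (by linarith) 3
      rw [hFτ]
      nlinarith [h, hna, mul_pos hna hna]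
    · rw [ht, hF0]; simp
    · have h := key_pos 0 τ le_rfl ht.le ht
      rw [hF]
      have hb3 : (0:ℝ) < τ ^ 3 := pow_pos ht 3
      nlinarith [h, hb3, mul_pos hb3 hb3]
  refine ⟨hnonneg, ?_, ?_⟩
  · -- monotone on [0, ∞)
    intro a ha b hb hab
    simp only [Set.mem_Ici] at ha hb
    show f x a * a - 4 * FSP.Fprim f x a ≤ f x b * b - 4 * FSP.Fprim f x b
    rcases eq_or_lt_of_le ha with h0 | h0
    · have h1 : f x a * a - 4 * FSP.Fprim f x a = 0 := by rw [← h0, hF0]; ring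
      rw [h1]; exact hnonneg b
    rcases eq_or_lt_of_le hab with he | he
    · rw [he]
    have hbpos : 0 < b := lt_trans h0 he
    have hdiff : FSP.Fprim f x b - FSP.Fprim f x a = ∫ r in a..b, f x r := by
      rw [hF, hF, intervalIntegral.integral_interval_sub_left (hint 0 b) (hint 0 a)]
    have hI := key_pos a b ha hab hbpos
    have hcmp := hmono_le a b hbpos ha hab
    have hmul := mul_le_mul_of_nonneg_right hcmp h0.le
    have hb3 : (0:ℝ) < b ^ 3 := pow_pos hbpos 3
    have hkey : 0 ≤ (f x b * b - f x a * a - 4 * ∫ r in a..b, f x r) * b ^ 3 := by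
      nlinarith [hI, hmul]
    have hgoal : 4 * (FSP.Fprim f x b - FSP.Fprim f x a) ≤ f x b * b - f x a * a := by
      rw [hdiff]
      nlinarith [hkey, hb3]
    linarith
  · -- antitone on (-∞, 0]
    intro a ha b hb hab
    simp only [Set.mem_Iic] at ha hb
    show f x b * b - 4 * FSP.Fprim f x b ≤ f x a * a - 4 * FSP.Fprim f x a
    rcases eq_or_lt_of_le hb with h0 | h0
    · have h1 : f x b * b - 4 * FSP.Fprim f x b = 0 := by rw [h0, hF0]; ring
      rw [h1]; exact hnonneg a
    rcases eq_or_lt_of_le hab with he | he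
    · rw [he]
    have haneg : a < 0 := lt_trans he h0
    have hdiff : FSP.Fprim f x b - FSP.Fprim f x a = ∫ r in a..b, f x r := by
      rw [hF, hF, intervalIntegral.integral_interval_sub_left (hint 0 b) (hint 0 a)]
    have hI := key_neg a b haneg hab hb
    have hcmp := hneg_le a b haneg hab hb
    have hmul := mul_le_mul_of_nonneg_right hcmp (by linarith : (0:ℝ) ≤ -b)
    have ha3 : (0:ℝ) < (-a) ^ 3 := pow_pos (by linarith) 3
    have hkey : 0 ≤ (4 * (∫ r in a..b, f x r) - (f x b * b - f x a * a)) * (-a) ^ 3 := by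
      nlinarith [hI, hmul]
    have hgoal : f x b * b - f x a * a ≤ 4 * (FSP.Fprim f x b - FSP.Fprim f x a) := by
      rw [hdiff]
      nlinarith [hkey, ha3]
    linarith
end
end
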